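/- For m = 1, the Hankel determinant of (Φ_n[a,r,1]_q)_{n≥0} equals q^{2r·C(n,2) + 2·C(n,3)} a^{C(n,2)} Π_{i=0}^{n-1} [i]_q! ((1-q)a; q)_i, where ((1-q)a; q)_i = Π_{j=0}^{i-1} (1 - q^j (1-q) a) is the q-Pochhammer symbol and [i]_q! = Π_{j=1}^i [j]_q. -/

import Mathlib

/-!
Expand `Φ_n(x) = Σ_k E n k · p_k(x)` in the basis `p_k(x) = ∏_{i<k} (x - q^i a)`, so that
`Φ_n(a) = E n 0`. The Whitney recurrence reads
`Φ_{n+1}(x) = [r]_q Φ_n(x) + q^r x (Φ_n(qx) + (D_q Φ_n)(x))`, and this operator acts tridiagonally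
on the `p_k`, with subdiagonal entries `q^{k+r}`. So `Φ_n(a)` is the moment sequence of a Jacobi
continued fraction: with the weights `h_k = a^k [k]_q! ((1-q)a; q)_k` that make the tridiagonal
matrix symmetric, the Hankel matrix factors as `L diag(h) Lᵀ`, where `L = (E i k)` is lower
triangular with diagonal entries `∏_{i<k} q^{i+r}`.
-/

/-- The q-integer `[t]_q = 1 + q + ... + q^(t-1)`. -/
def qint {K : Type*} [CommRing K] (q : K) (t : ℕ) : K :=
  ∑ i ∈ Finset.range t, q ^ i

/-- The q-analogue of the r-Whitney numbers of the second kind, defined by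
`W[0,0] = 1`, vanishing outside `0 ≤ k ≤ n`, and the triangular recurrence. -/
def W {K : Type*} [CommRing K] (q : K) (m r : ℕ) : ℕ → ℕ → K
  | 0, 0 => 1
  | 0, _ + 1 => 0
  | n + 1, 0 => qint q r * W q m r n 0
  | n + 1, k + 1 => q ^ (m * k + r) * W q m r n k + qint q (m * (k + 1) + r) * W q m r n (k + 1)

/-- `Φ_n[a,r,m]_q = Σ_{k=0}^n W_{m,r}[n,k]_q a^k`. -/
def PhiEval {K : Type*} [Field K] (q : K) (m r : ℕ) (a : K) (n : ℕ) : K :=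
  ∑ k ∈ Finset.range (n + 1), W q m r n k * a ^ k

open Finset Matrix

section Tridiagonal

variable {R : Type*} [CommRing R]

/-- `u ↦ u J` for the tridiagonal matrix `J` with `J k (k+1) = α k`, `J k k = β k` and
`J (k+1) k = γ k`. -/
def vecMulTridiag (α β γ : ℕ → R) : (ℕ → R) →ₗ[R] ℕ → R where
  toFun u
    | 0 => β 0 * u 0 + γ 0 * u 1
    | k + 1 => α k * u k + β (k + 1) * u (k + 1) + γ (k + 1) * u (k + 2)
  map_add' u v := by funext k; cases k <;> simp only [Pi.add_apply] <;> ring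
  map_smul' c u := by
    funext k; cases k <;> simp only [Pi.smul_apply, smul_eq_mul, RingHom.id_apply] <;> ring

variable {α β γ w : ℕ → R}

@[simp] lemma vecMulTridiag_apply_zero (u : ℕ → R) :
    vecMulTridiag α β γ u 0 = β 0 * u 0 + γ 0 * u 1 := rfl

@[simp] lemma vecMulTridiag_apply_succ (u : ℕ → R) (k : ℕ) :
    vecMulTridiag α β γ u (k + 1) = α k * u k + β (k + 1) * u (k + 1) + γ (k + 1) * u (k + 2) :=
  rfl

/-- `J` is self-adjoint for the weights `w`, up to a boundary term at `N`. -/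
lemma sum_vecMulTridiag_mul_mul (hw : ∀ k, α k * w (k + 1) = γ k * w k) (u v : ℕ → R) (N : ℕ) :
    ∑ k ∈ range (N + 1), vecMulTridiag α β γ u k * v k * w k =
      ∑ k ∈ range (N + 1), β k * u k * v k * w k +
        ∑ k ∈ range N, γ k * w k * (u k * v (k + 1) + u (k + 1) * v k) +
          γ N * u (N + 1) * v N * w N := by
  induction N with
  | zero =>
    simp only [zero_add, range_one, sum_singleton, vecMulTridiag_apply_zero, range_zero,
      sum_empty, add_zero]
    ring
  | succ N ih =>
    rw [sum_range_succ, ih, sum_range_succ _ (N + 1), sum_range_succ _ N, sum_range_succ _ N,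
      vecMulTridiag_apply_succ]
    linear_combination u N * v (N + 1) * hw N

lemma sum_vecMulTridiag_mul_mul_comm (hw : ∀ k, α k * w (k + 1) = γ k * w k) {u v : ℕ → R}
    {N : ℕ} (hu : u (N + 1) = 0) (hv : v (N + 1) = 0) :
    ∑ k ∈ range (N + 1), vecMulTridiag α β γ u k * v k * w k =
      ∑ k ∈ range (N + 1), u k * vecMulTridiag α β γ v k * w k := by
  calc ∑ k ∈ range (N + 1), vecMulTridiag α β γ u k * v k * w k
      = ∑ k ∈ range (N + 1), β k * u k * v k * w k +
          ∑ k ∈ range N, γ k * w k * (u k * v (k + 1) + u (k + 1) * v k) := by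
        rw [sum_vecMulTridiag_mul_mul hw, hu, mul_zero, zero_mul, zero_mul, add_zero]
    _ = ∑ k ∈ range (N + 1), vecMulTridiag α β γ v k * u k * w k := by
        rw [sum_vecMulTridiag_mul_mul hw, hv, mul_zero, zero_mul, zero_mul, add_zero]
        congr 1 <;> exact sum_congr rfl fun k _ => by ring
    _ = ∑ k ∈ range (N + 1), u k * vecMulTridiag α β γ v k * w k :=
        sum_congr rfl fun k _ => by ring

/-- The rows `E n = e₀ Jⁿ` of a Stieltjes tableau; `E n 0 = (Jⁿ) 0 0` are the moments of the
Jacobi continued fraction with coefficients `β k` and `α k * γ k`. -/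
structure IsStieltjesTableau (α β γ : ℕ → R) (E : ℕ → ℕ → R) : Prop where
  zero : E 0 = Pi.single 0 1
  succ (n : ℕ) : E (n + 1) = vecMulTridiag α β γ (E n)

namespace IsStieltjesTableau

variable {E : ℕ → ℕ → R} (hE : IsStieltjesTableau α β γ E)
include hE

lemma eq_zero_of_lt {n k : ℕ} (h : n < k) : E n k = 0 := by
  induction n generalizing k with
  | zero => rw [hE.zero, Pi.single_eq_of_ne (by omega)]
  | succ n ih =>
    obtain ⟨k, rfl⟩ : ∃ k', k = k' + 1 := ⟨k - 1, by omega⟩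
    rw [hE.succ, vecMulTridiag_apply_succ, ih (by omega), ih (by omega), ih (by omega)]
    ring

lemma diag (n : ℕ) : E n n = ∏ i ∈ range n, α i := by
  induction n with
  | zero => simp [hE.zero]
  | succ n ih =>
    rw [hE.succ, vecMulTridiag_apply_succ, ih, hE.eq_zero_of_lt (by omega),
      hE.eq_zero_of_lt (by omega), prod_range_succ]
    ring

lemma sum_range_mul_eq_of_lt (f : ℕ → R) {i N : ℕ} (hi : i < N) :
    ∑ k ∈ range N, E i k * f k = ∑ k ∈ range (i + 1), E i k * f k := by
  refine (sum_subset (range_subset_range.2 hi) fun k _ hk => ?_).symm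
  rw [hE.eq_zero_of_lt (by simpa using hk), zero_mul]

lemma sum_mul_mul_weight_of_lt (hw : ∀ k, α k * w (k + 1) = γ k * w k) {i N : ℕ} (j : ℕ)
    (hi : i < N) : ∑ k ∈ range N, E i k * E j k * w k = w 0 * E (i + j) 0 := by
  suffices h : ∀ i j, ∑ k ∈ range (i + j + 1), E i k * E j k * w k = w 0 * E (i + j) 0 by
    simp only [mul_assoc]
    rw [hE.sum_range_mul_eq_of_lt _ hi, ← hE.sum_range_mul_eq_of_lt _ (by omega : i < i + j + 1)]
    simpa only [mul_assoc] using h i j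
  intro i
  induction i with
  | zero => intro j; simp [hE.zero, Pi.single_apply, mul_comm]
  | succ i ih =>
    intro j
    rw [show i + 1 + j + 1 = i + j + 1 + 1 by omega, hE.succ,
      sum_vecMulTridiag_mul_mul_comm hw (hE.eq_zero_of_lt (by omega))
        (hE.eq_zero_of_lt (by omega)), ← hE.succ, show i + j + 1 + 1 = i + (j + 1) + 1 by omega, ih,
      show i + 1 + j = i + (j + 1) by omega]

theorem det_hankel (hw : ∀ k, α k * w (k + 1) = γ k * w k) (hw0 : w 0 = 1) (n : ℕ) :
    (of fun i j : Fin n => E (i + j) 0).det =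
      (∏ k ∈ range n, ∏ i ∈ range k, α i) ^ 2 * ∏ k ∈ range n, w k := by
  set L : Matrix (Fin n) (Fin n) R := of fun i k => E i k
  have hLDL : (of fun i j : Fin n => E (i + j) 0) = L * diagonal (fun k : Fin n => w k) * Lᵀ := by
    ext i j
    rw [of_apply, mul_apply, ← one_mul (E _ 0), ← hw0,
      ← hE.sum_mul_mul_weight_of_lt hw j i.isLt, ← Fin.sum_univ_eq_sum_range]
    simp [L, mul_diagonal, mul_right_comm]
  have hL : L.det = ∏ k ∈ range n, ∏ i ∈ range k, α i := by
    rw [det_of_isLowerTriangular L fun i k (h : i < k) => hE.eq_zero_of_lt h,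
      ← Fin.prod_univ_eq_prod_range]
    simp [L, hE.diag]
  rw [hLDL, det_mul, det_mul, det_transpose, det_diagonal, hL, Fin.prod_univ_eq_prod_range]
  ring

end IsStieltjesTableau

end Tridiagonal

section QAnalogues

variable {R : Type*} [CommRing R] (q a : R)

lemma qint_zero : qint q 0 = 0 := by simp [qint]

lemma qint_add (m n : ℕ) : qint q (m + n) = qint q m + q ^ m * qint q n := by
  simp only [qint, sum_range_add, mul_sum, pow_add]

lemma qint_succ (m : ℕ) : qint q (m + 1) = 1 + q * qint q m := by
  rw [add_comm, qint_add]
  simp [qint]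

lemma one_sub_mul_qint (m : ℕ) : (1 - q) * qint q m = 1 - q ^ m := mul_neg_geom_sum q m

/-- The coefficient of `p_k = ∏ i < k, (X - q ^ i * a)` in `X ^ j`: the recursion is
`X * p_k = p_(k+1) + q ^ k * a * p_k`. -/
def qTaylorCoeff : ℕ → ℕ → R
  | 0, 0 => 1
  | 0, _ + 1 => 0
  | j + 1, 0 => a * qTaylorCoeff j 0
  | j + 1, k + 1 => qTaylorCoeff j k + q ^ (k + 1) * a * qTaylorCoeff j (k + 1)

lemma qTaylorCoeff_succ_succ (j k : ℕ) :
    qTaylorCoeff q a (j + 1) (k + 1) =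
      qTaylorCoeff q a j k + q ^ (k + 1) * a * qTaylorCoeff q a j (k + 1) := rfl

@[simp] lemma qTaylorCoeff_zero_right (j : ℕ) : qTaylorCoeff q a j 0 = a ^ j := by
  induction j with
  | zero => exact (pow_zero a).symm
  | succ j ih => rw [qTaylorCoeff, ih, pow_succ']

/-- Coefficient form of `D_q p_(k+1) = [k+1]_q p_k`. -/
lemma pow_mul_qint_mul_qTaylorCoeff_succ (j k : ℕ) :
    q ^ k * qint q (k + 1) * (a * qTaylorCoeff q a j (k + 1)) =
      (qint q j - qint q k) * qTaylorCoeff q a j k := by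
  induction j generalizing k with
  | zero => cases k <;> simp [qTaylorCoeff, qint_zero]
  | succ j ih =>
    cases k with
    | zero =>
      have h := ih 0
      simp only [qTaylorCoeff_succ_succ, qTaylorCoeff_zero_right, qint_succ, qint_zero] at h ⊢
      linear_combination q * a * h
    | succ k =>
      have h0 := ih k
      have h1 := ih (k + 1)
      simp only [qTaylorCoeff_succ_succ, qint_succ] at h0 h1 ⊢
      linear_combination q * h0 + q ^ (k + 2) * a * h1

end QAnalogues

section WhitneyTableau

variable {R : Type*} [CommRing R] (q a : R) (r : ℕ)

def whitneyDiag : ℕ → R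
  | 0 => qint q r + a * q ^ r
  | k + 1 => qint q (k + 1 + r) + a * q ^ (k + r) * (q ^ (k + 2) + q ^ (k + 1) - 1)

def whitneyUpper (k : ℕ) : R := q ^ (k + r) * a * qint q (k + 1) * (1 - q ^ k * (1 - q) * a)

lemma qTaylorCoeff_shift (j : ℕ) :
    q ^ (j + r) • qTaylorCoeff q a (j + 1) + qint q (j + r) • qTaylorCoeff q a j =
      vecMulTridiag (fun k => q ^ (k + r)) (whitneyDiag q a r) (whitneyUpper q a r)
        (qTaylorCoeff q a j) := by
  have hjr : qint q (j + r) = qint q r + q ^ r * qint q j := by rw [add_comm, qint_add]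
  have hj := one_sub_mul_qint q j
  funext k
  cases k with
  | zero =>
    have h := pow_mul_qint_mul_qTaylorCoeff_succ q a j 0
    simp only [qint_succ, qint_zero, pow_zero, one_mul, mul_zero, add_zero, sub_zero,
      qTaylorCoeff_zero_right] at h
    simp only [Pi.add_apply, Pi.smul_apply, smul_eq_mul, vecMulTridiag_apply_zero, whitneyDiag,
      whitneyUpper, qTaylorCoeff_zero_right, zero_add, qint_succ, qint_zero]
    linear_combination a ^ j * hjr - q ^ r * (1 - (1 - q) * a) * h + q ^ r * a ^ (j + 1) * hj
  | succ k =>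
    have hk := one_sub_mul_qint q k
    have hk1 := one_sub_mul_qint q (k + 1)
    have hkr : qint q (k + 1 + r) = qint q r + q ^ r * qint q (k + 1) := by rw [add_comm, qint_add]
    have h0 := pow_mul_qint_mul_qTaylorCoeff_succ q a j k
    have h1 := pow_mul_qint_mul_qTaylorCoeff_succ q a j (k + 1)
    set X := qTaylorCoeff q a j k
    set Y := qTaylorCoeff q a j (k + 1)
    simp only [Pi.add_apply, Pi.smul_apply, smul_eq_mul, vecMulTridiag_apply_succ, whitneyDiag,
      whitneyUpper, qTaylorCoeff_succ_succ]
    linear_combination -q ^ r * (1 - q ^ (k + 1) * (1 - q) * a) * h1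
      + (q ^ r * X + q ^ (k + 1 + r) * a * Y) * hj - q ^ r * X * hk + q ^ r * (1 - q) * h0
      - (q ^ (k + r) * a * Y + q ^ (k + 1 + r) * a * Y) * hk1 + Y * hjr - Y * hkr

lemma W_eq_zero_of_lt (m : ℕ) {n k : ℕ} (h : n < k) : W q m r n k = 0 := by
  induction n generalizing k with
  | zero => obtain ⟨k, rfl⟩ : ∃ k', k = k' + 1 := ⟨k - 1, by omega⟩; rfl
  | succ n ih =>
    obtain ⟨k, rfl⟩ : ∃ k', k = k' + 1 := ⟨k - 1, by omega⟩
    rw [W, ih (by omega), ih (by omega), mul_zero, mul_zero, add_zero]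

lemma sum_W_one_succ_smul {M : Type*} [AddCommGroup M] [Module R M] (f : ℕ → M) (n : ℕ) :
    ∑ j ∈ range (n + 2), W q 1 r (n + 1) j • f j =
      ∑ j ∈ range (n + 1), W q 1 r n j • (q ^ (j + r) • f (j + 1) + qint q (j + r) • f j) := by
  have hW (j : ℕ) : W q 1 r (n + 1) (j + 1) =
      q ^ (j + r) * W q 1 r n j + qint q (j + 1 + r) * W q 1 r n (j + 1) := by
    simp only [W, one_mul]
  have hdiag : ∑ j ∈ range (n + 2), W q 1 r n j • qint q (j + r) • f j =
      ∑ j ∈ range (n + 1), W q 1 r n j • qint q (j + r) • f j := by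
    rw [sum_range_succ, W_eq_zero_of_lt q r 1 (by omega : n < n + 1), zero_smul, add_zero]
  have hW0 : W q 1 r (n + 1) 0 = qint q (0 + r) * W q 1 r n 0 := by rw [zero_add]; rfl
  rw [sum_range_succ', hW0]
  simp only [smul_add, sum_add_distrib]
  rw [← hdiag, sum_range_succ' _ (n + 1)]
  simp only [hW, add_smul, sum_add_distrib, smul_smul, mul_comm]
  abel

/-- The coefficients `E n k` of `Φ_n` in the basis `p_k`. -/
def whitneyTableau (n : ℕ) : ℕ → R := ∑ j ∈ range (n + 1), W q 1 r n j • qTaylorCoeff q a j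

theorem isStieltjesTableau_whitneyTableau :
    IsStieltjesTableau (fun k => q ^ (k + r)) (whitneyDiag q a r) (whitneyUpper q a r)
      (whitneyTableau q a r) where
  zero := by
    funext k
    cases k <;> simp [whitneyTableau, W, qTaylorCoeff]
  succ n := by
    rw [whitneyTableau, sum_W_one_succ_smul, whitneyTableau, map_sum]
    simp only [qTaylorCoeff_shift, map_smul]

end WhitneyTableau

lemma whitneyTableau_apply_zero {K : Type*} [Field K] (q a : K) (r n : ℕ) :
    whitneyTableau q a r n 0 = PhiEval q 1 r a n := by
  simp [whitneyTableau, PhiEval]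

section HankelWeight

variable {R : Type*} [CommRing R] (q a : R)

def hankelWeight (k : ℕ) : R :=
  a ^ k * (∏ j ∈ Icc 1 k, qint q j) * ∏ j ∈ range k, (1 - q ^ j * (1 - q) * a)

lemma pow_mul_hankelWeight_succ (r k : ℕ) :
    q ^ (k + r) * hankelWeight q a (k + 1) = whitneyUpper q a r k * hankelWeight q a k := by
  rw [hankelWeight, hankelWeight, whitneyUpper, prod_Icc_succ_top (by omega), prod_range_succ]
  ring

lemma prod_range_hankelWeight (n : ℕ) :
    ∏ k ∈ range n, hankelWeight q a k = a ^ n.choose 2 *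
      ∏ i ∈ range n, (∏ j ∈ Icc 1 i, qint q j) * ∏ j ∈ range i, (1 - q ^ j * (1 - q) * a) := by
  simp only [hankelWeight, mul_assoc, prod_mul_distrib]
  rw [prod_pow_eq_pow_sum, sum_range_id, Nat.choose_two_right]

end HankelWeight

lemma sum_range_sum_range_add (r n : ℕ) :
    ∑ k ∈ range n, ∑ i ∈ range k, (i + r) = r * n.choose 2 + n.choose 3 := by
  induction n with
  | zero => simp
  | succ n ih =>
    rw [sum_range_succ, ih, sum_add_distrib, sum_range_id, ← Nat.choose_two_right,
      Nat.choose_succ_succ' n 1, Nat.choose_succ_succ' n 2]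
    simp only [sum_const, card_range, smul_eq_mul, Nat.choose_one_right]
    ring

theorem hankel_transform_Phi_m_one_general {K : Type*} [Field K] (q a : K) (r : ℕ) (n : ℕ) :
    Matrix.det (Matrix.of fun i j : Fin n => PhiEval q 1 r a (i.1 + j.1))
      = q ^ (2 * r * n.choose 2 + 2 * n.choose 3) * a ^ n.choose 2 *
          ∏ i ∈ Finset.range n,
            (∏ j ∈ Finset.Icc 1 i, qint q j) *
              ∏ j ∈ Finset.range i, (1 - q ^ j * (1 - q) * a) := by
  simp only [← whitneyTableau_apply_zero q a r]
  rw [(isStieltjesTableau_whitneyTableau q a r).det_hankel (pow_mul_hankelWeight_succ q a r)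
      (by simp [hankelWeight]) n,
    prod_range_hankelWeight]
  simp only [prod_pow_eq_pow_sum, sum_range_sum_range_add, ← pow_mul]
  ring

/-- for `m = 1`, the Hankel determinant of `(Φ_n[a,r,1]_q)` equals
`q^(2r·C(n,2) + 2·C(n,3)) a^(C(n,2)) Π_{i=0}^{n-1} [i]_q! ((1-q)a; q)_i`. -/
theorem hankel_transform_Phi_m_one {K : Type*} [Field K] (q a : K) (hq0 : q ≠ 0)
    (hq1 : q ≠ 1) (r : ℕ) (n : ℕ) :
    Matrix.det (Matrix.of fun i j : Fin n => PhiEval q 1 r a (i.1 + j.1))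
      = q ^ (2 * r * n.choose 2 + 2 * n.choose 3) * a ^ n.choose 2 *
          ∏ i ∈ Finset.range n,
            (∏ j ∈ Finset.Icc 1 i, qint q j) *
              ∏ j ∈ Finset.range i, (1 - q ^ j * (1 - q) * a) :=
  hankel_transform_Phi_m_one_general q a r n
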